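/- For every positive integer d that is not a perfect square, there exists a positive integer n such that the period length of the continued fraction expansion of n·√d equals 2. -/

import Mathlib

/-!
A solution of Pell's equation `x ^ 2 - d * y ^ 2 = 1` with `x > 1`, `y > 0` gives
`y * √d = √(x ^ 2 - 1)`, and for every integer `k ≥ 2` the continued fraction of
`α = √(k ^ 2 - 1)` is `[k - 1; 1, 2k - 2, 1, 2k - 2, …]`: its complete quotients are `α`,
`(α - (k - 1))⁻¹` and `α + (k - 1)`, and the last one has the same fractional part as `α`.
-/

/-- Iteration of the Gauss-type map producing the complete quotients of the
continued fraction expansion of `α`. -/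
noncomputable def cfIter (α : ℝ) : ℕ → ℝ
  | 0 => α
  | n + 1 => (Int.fract (cfIter α n))⁻¹

/-- The `n`-th partial quotient of the continued fraction of `α`. -/
noncomputable def cfTerm (α : ℝ) (n : ℕ) : ℤ := ⌊cfIter α n⌋

/-- `t` is an eventual period of the sequence `f`. -/
def EvPeriod (t : ℕ) (f : ℕ → ℤ) : Prop := ∃ N, ∀ n, N ≤ n → f (n + t) = f n

/-- `periodLen α` is the length of the periodic part of the continued fraction
expansion of `α`: the least positive eventual period of its partial quotients. -/
noncomputable def periodLen (α : ℝ) : ℕ := sInf {t | 0 < t ∧ EvPeriod t (cfTerm α)}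

lemma cfIter_periodic_of_eq {α : ℝ} {m p : ℕ} (h : cfIter α (m + p) = cfIter α m) :
    Function.Periodic (fun n ↦ cfIter α (n + m)) p := by
  intro n
  induction n with
  | zero => simpa [add_comm] using h
  | succ n ih =>
    simp only at ih ⊢
    rw [show n + 1 + p + m = n + p + m + 1 by omega, show n + 1 + m = n + m + 1 by omega,
      cfIter, cfIter, ih]

lemma sInf_evPeriod_eq_two {f : ℕ → ℤ} (h2 : EvPeriod 2 f) (h1 : ¬ EvPeriod 1 f) :
    sInf {t | 0 < t ∧ EvPeriod t f} = 2 := by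
  refine le_antisymm (Nat.sInf_le ⟨two_pos, h2⟩) (le_csInf ⟨2, two_pos, h2⟩ ?_)
  rintro t ⟨ht, hf⟩
  have : t ≠ 1 := by rintro rfl; exact h1 hf
  omega

lemma periodLen_eq_two_of_cfIter_three_eq {α : ℝ} (h : cfIter α 3 = cfIter α 1)
    (hne : cfTerm α 2 ≠ cfTerm α 1) : periodLen α = 2 := by
  have hper : Function.Periodic (fun n ↦ cfTerm α (n + 1)) 2 := fun n ↦
    congrArg Int.floor (cfIter_periodic_of_eq (m := 1) (p := 2) h n)
  refine sInf_evPeriod_eq_two ⟨1, fun n hn ↦ ?_⟩ ?_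
  · obtain ⟨n, rfl⟩ := Nat.exists_eq_add_of_le' hn
    exact hper n
  · -- far out, the terms of index 1 and 2 recur at consecutive positions
    rintro ⟨N, hN⟩
    have h0 := (hper.nat_mul N) 0
    have h1 := (hper.nat_mul N) 1
    simp only [Nat.cast_id, zero_add] at h0 h1
    apply hne
    rw [← h1, ← h0, ← hN (N * 2 + 1) (by omega)]
    ring_nf

section SqrtSqSubOne

variable {k : ℤ}

lemma sub_half_lt_sqrt_sq_sub_one (hk : 2 ≤ k) : (k : ℝ) - 1 / 2 < √((k : ℝ) ^ 2 - 1) := by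
  have hk' : (2 : ℝ) ≤ k := by exact_mod_cast hk
  exact Real.lt_sqrt_of_sq_lt (by nlinarith)

lemma sqrt_sq_sub_one_lt (hk : 2 ≤ k) : √((k : ℝ) ^ 2 - 1) < k := by
  have hk' : (2 : ℝ) ≤ k := by exact_mod_cast hk
  exact (Real.sqrt_lt' (by linarith)).2 (by linarith)

lemma floor_sqrt_sq_sub_one (hk : 2 ≤ k) : ⌊√((k : ℝ) ^ 2 - 1)⌋ = k - 1 := by
  have := sub_half_lt_sqrt_sq_sub_one hk
  have := sqrt_sq_sub_one_lt hk
  rw [Int.floor_eq_iff]; push_cast; constructor <;> linarith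

lemma cfIter_one_sqrt_sq_sub_one (hk : 2 ≤ k) :
    cfIter √((k : ℝ) ^ 2 - 1) 1 = (√((k : ℝ) ^ 2 - 1) - (k - 1))⁻¹ := by
  rw [cfIter, cfIter, Int.fract, floor_sqrt_sq_sub_one hk]; push_cast; rfl

lemma cfTerm_one_sqrt_sq_sub_one (hk : 2 ≤ k) : cfTerm √((k : ℝ) ^ 2 - 1) 1 = 1 := by
  have := sub_half_lt_sqrt_sq_sub_one hk
  have := sqrt_sq_sub_one_lt hk
  rw [cfTerm, cfIter_one_sqrt_sq_sub_one hk, Int.floor_eq_iff, Int.cast_one]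
  constructor
  · exact one_le_inv₀ (by linarith) |>.2 (by linarith)
  · rw [inv_lt_iff_one_lt_mul₀ (by linarith)]; linarith

lemma cfIter_two_sqrt_sq_sub_one (hk : 2 ≤ k) :
    cfIter √((k : ℝ) ^ 2 - 1) 2 = √((k : ℝ) ^ 2 - 1) + (k - 1) := by
  have hk' : (2 : ℝ) ≤ k := by exact_mod_cast hk
  have hlo := sub_half_lt_sqrt_sq_sub_one hk
  have hα : √((k : ℝ) ^ 2 - 1) ^ 2 = k ^ 2 - 1 := Real.sq_sqrt (by nlinarith)
  rw [cfIter, Int.fract]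
  change (_ - (cfTerm _ 1 : ℝ))⁻¹ = _
  rw [cfTerm_one_sqrt_sq_sub_one hk, cfIter_one_sqrt_sq_sub_one hk, Int.cast_one]
  have hne : √((k : ℝ) ^ 2 - 1) - (k - 1) ≠ 0 := by linarith
  -- `(α - (k - 1)) * (α + (k - 1)) = α ^ 2 - (k - 1) ^ 2 = 2 * (k - 1)`
  rw [inv_eq_iff_eq_inv]
  refine eq_inv_of_mul_eq_one_left ?_
  field_simp
  linear_combination -hα

lemma cfTerm_two_sqrt_sq_sub_one (hk : 2 ≤ k) : cfTerm √((k : ℝ) ^ 2 - 1) 2 = 2 * k - 2 := by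
  have := sub_half_lt_sqrt_sq_sub_one hk
  have := sqrt_sq_sub_one_lt hk
  rw [cfTerm, cfIter_two_sqrt_sq_sub_one hk, Int.floor_eq_iff]
  push_cast
  constructor <;> linarith

lemma cfIter_three_sqrt_sq_sub_one (hk : 2 ≤ k) :
    cfIter √((k : ℝ) ^ 2 - 1) 3 = cfIter √((k : ℝ) ^ 2 - 1) 1 := by
  rw [cfIter, cfIter_two_sqrt_sq_sub_one hk, ← Int.cast_one, ← Int.cast_sub,
    Int.fract_add_intCast]
  rfl

lemma periodLen_sqrt_sq_sub_one (hk : 2 ≤ k) : periodLen √((k : ℝ) ^ 2 - 1) = 2 :=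
  periodLen_eq_two_of_cfIter_three_eq (cfIter_three_sqrt_sq_sub_one hk) <| by
    rw [cfTerm_two_sqrt_sq_sub_one hk, cfTerm_one_sqrt_sq_sub_one hk]
    omega

end SqrtSqSubOne

theorem stmt1 (d : ℕ) (hd : 0 < d) (hsq : ¬ IsSquare d) :
    ∃ n : ℕ, 0 < n ∧ periodLen ((n : ℝ) * Real.sqrt d) = 2 := by
  obtain ⟨a, hx, hy⟩ := Pell.Solution₁.exists_pos_of_not_isSquare (d := d) (by exact_mod_cast hd)
    (by rwa [Int.isSquare_natCast_iff])
  refine ⟨a.y.toNat, by omega, ?_⟩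
  have hpell : (a.x : ℝ) ^ 2 - 1 = ((a.y.toNat : ℝ) * √d) ^ 2 := by
    rw [mul_pow, Real.sq_sqrt d.cast_nonneg,
      show (a.y.toNat : ℝ) = a.y by exact_mod_cast Int.toNat_of_nonneg hy.le, mul_comm]
    exact_mod_cast a.prop_y.symm
  rw [← Real.sqrt_sq (by positivity : (0 : ℝ) ≤ a.y.toNat * √d), ← hpell]
  exact periodLen_sqrt_sq_sub_one (by omega)
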